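/- arXiv:2502.15045 — 3 statements merged into one kernel-verified Lean document; each statement's English description precedes it below -/
import Mathlib

section
/- For any collection of n mutually unbiased bases {|φ_x^a⟩} (x = 0,...,n−1, a = 0,...,d−1) in a d-dimensional complex Hilbert space, any density matrix ρ, and any fixed choice of outcomes a_x ∈ {0,...,d−1} for each x, the average (1/n) ∑_{x=0}^{n−1} ⟨φ_x^{a_x}| ρ |φ_x^{a_x}⟩ is at most (1/d)(1 + (d−1)/√n). -/
open Matrix Finset Filter
open scoped ComplexOrder

noncomputable def expec {d : ℕ} (ρ : Matrix (Fin d) (Fin d) ℂ) (v : Fin d → ℂ) : ℝ :=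
  Complex.re (dotProduct (star v) (ρ.mulVec v))

def IsDensity {d : ℕ} (ρ : Matrix (Fin d) (Fin d) ℂ) : Prop :=
  ρ.PosSemidef ∧ ρ.trace = 1

def IsMUBFamily {d n : ℕ} (φ : Fin n → Fin d → Fin d → ℂ) : Prop :=
  (∀ x a b, dotProduct (star (φ x a)) (φ x b) = if a = b then 1 else 0) ∧
  (∀ x y a b, x ≠ y → ‖dotProduct (star (φ x a)) (φ y b)‖ = 1 / Real.sqrt d)

noncomputable def outer {d : ℕ} (v : Fin d → ℂ) : Matrix (Fin d) (Fin d) ℂ :=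
  vecMulVec v (star v)

noncomputable def gibbs {d : ℕ} (β : ℝ) (H : Matrix (Fin d) (Fin d) ℂ) : Matrix (Fin d) (Fin d) ℂ :=
  (NormedSpace.exp ((-β : ℂ) • H)).trace⁻¹ • NormedSpace.exp ((-β : ℂ) • H)

/-!
Let `A = ∑ₓ |φₓ⟩⟨φₓ|` be the frame operator of the chosen basis vectors, so that the sum of the
overlaps is `tr (ρ A)`. The MUB conditions fix `tr A = n` and `tr A² = n + n (n - 1) / d`.
Centering both operators at multiples of the identity gives
`tr (ρ A) - n / d = tr ((ρ - 1 / d) (A - n / d))`, and the Cauchy–Schwarz inequality for the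
Hilbert–Schmidt inner product, together with the purity bound `tr ρ² ≤ 1`, bounds this by
`√((1 - 1 / d) · n (1 - 1 / d)) = (d - 1) √n / d`.
-/

namespace Matrix

variable {m 𝕜 : Type*} [Fintype m] [RCLike 𝕜]

lemma IsHermitian.re_trace_mul_self_nonneg {Z : Matrix m m 𝕜} (hZ : Z.IsHermitian) :
    0 ≤ RCLike.re (Z * Z).trace := by
  have h := (posSemidef_conjTranspose_mul_self Z).trace_nonneg
  rw [hZ.eq] at h
  exact (RCLike.nonneg_iff.mp h).1

lemma IsHermitian.re_trace_mul_sq_le {X Y : Matrix m m 𝕜} (hX : X.IsHermitian)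
    (hY : Y.IsHermitian) :
    RCLike.re (X * Y).trace ^ 2 ≤ RCLike.re (X * X).trace * RCLike.re (Y * Y).trace := by
  have hquad : ∀ t : ℝ, 0 ≤ RCLike.re (Y * Y).trace * (t * t) +
      2 * RCLike.re (X * Y).trace * t + RCLike.re (X * X).trace := by
    intro t
    have h := (hX.add (hY.smul (IsSelfAdjoint.all t))).re_trace_mul_self_nonneg
    simp only [add_mul, mul_add, trace_add, smul_mul_assoc, mul_smul_comm, trace_smul,
      trace_mul_comm Y X, map_add, RCLike.smul_re] at h
    linarith
  have h := discrim_le_zero hquad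
  rw [discrim] at h
  nlinarith [hX.re_trace_mul_self_nonneg, hY.re_trace_mul_self_nonneg]

lemma PosSemidef.re_trace_mul_self_le [DecidableEq m] {ρ : Matrix m m 𝕜} (hρ : ρ.PosSemidef) :
    RCLike.re (ρ * ρ).trace ≤ RCLike.re ρ.trace ^ 2 := by
  have hsq : (ρ * ρ).trace = ∑ i, ((hρ.1.eigenvalues i ^ 2 : ℝ) : 𝕜) := by
    conv_lhs => rw [hρ.1.spectral_theorem, ← map_mul, Unitary.conjStarAlgAut_apply,
      trace_mul_cycle, Unitary.coe_star_mul_self, one_mul, diagonal_mul_diagonal, trace_diagonal]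
    simp [sq]
  rw [hsq, hρ.1.trace_eq_sum_eigenvalues, map_sum, map_sum]
  simp only [RCLike.ofReal_re]
  exact sum_sq_le_sq_sum_of_nonneg fun i _ => hρ.eigenvalues_nonneg i

lemma re_trace_sub_smul_one_mul_sub_smul_one [DecidableEq m] (X Y : Matrix m m 𝕜) (a b : ℝ) :
    RCLike.re ((X - a • 1) * (Y - b • 1)).trace = RCLike.re (X * Y).trace
      - b * RCLike.re X.trace - a * RCLike.re Y.trace + a * b * Fintype.card m := by
  simp only [sub_mul, mul_sub, smul_mul_assoc, mul_smul_comm, one_mul, mul_one, trace_sub,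
    trace_smul, trace_one, map_sub, RCLike.smul_re, RCLike.natCast_re]
  ring

lemma card_ne_zero_of_trace_eq_one {ρ : Matrix m m 𝕜} (hρ : ρ.trace = 1) :
    Fintype.card m ≠ 0 := by
  intro h
  rw [Fintype.card_eq_zero_iff] at h
  simp [trace] at hρ

theorem PosSemidef.re_trace_mul_le_of_trace_eq_one [DecidableEq m] {ρ A : Matrix m m 𝕜}
    (hρ : ρ.PosSemidef) (hρ1 : ρ.trace = 1) (hA : A.IsHermitian) :
    RCLike.re (ρ * A).trace ≤ RCLike.re A.trace / Fintype.card m +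
      √((1 - 1 / Fintype.card m) *
        (RCLike.re (A * A).trace - RCLike.re A.trace ^ 2 / Fintype.card m)) := by
  have hD : (Fintype.card m : ℝ) ≠ 0 := Nat.cast_ne_zero.mpr (card_ne_zero_of_trace_eq_one hρ1)
  have hρ1' : RCLike.re ρ.trace = 1 := by simp [hρ1]
  set t := RCLike.re A.trace
  set σ := ρ - (1 / Fintype.card m : ℝ) • (1 : Matrix m m 𝕜)
  set B := A - (t / Fintype.card m : ℝ) • (1 : Matrix m m 𝕜)
  have hσ : σ.IsHermitian := hρ.1.sub (isHermitian_one.smul (IsSelfAdjoint.all _))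
  have hB : B.IsHermitian := hA.sub (isHermitian_one.smul (IsSelfAdjoint.all _))
  have hσB : RCLike.re (σ * B).trace = RCLike.re (ρ * A).trace - t / Fintype.card m := by
    rw [re_trace_sub_smul_one_mul_sub_smul_one, hρ1']
    field_simp
    ring
  have hσσ : RCLike.re (σ * σ).trace = RCLike.re (ρ * ρ).trace - 1 / Fintype.card m := by
    rw [re_trace_sub_smul_one_mul_sub_smul_one, hρ1']
    field_simp
    ring
  have hBB : RCLike.re (B * B).trace = RCLike.re (A * A).trace - t ^ 2 / Fintype.card m := by
    rw [re_trace_sub_smul_one_mul_sub_smul_one]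
    field_simp
    ring
  have hpur : RCLike.re (σ * σ).trace ≤ 1 - 1 / Fintype.card m := by
    linarith [hρ1' ▸ hρ.re_trace_mul_self_le]
  have hCS := (hσ.re_trace_mul_sq_le hB).trans
    (mul_le_mul_of_nonneg_right hpur hB.re_trace_mul_self_nonneg)
  rw [hσB, hBB] at hCS
  linarith [Real.le_sqrt_of_sq_le hCS]

end Matrix

section outer

variable {d : ℕ}

lemma isHermitian_outer (v : Fin d → ℂ) : (outer v).IsHermitian := by
  simp [outer, IsHermitian, conjTranspose_vecMulVec]

lemma trace_mul_outer (ρ : Matrix (Fin d) (Fin d) ℂ) (v : Fin d → ℂ) :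
    (ρ * outer v).trace = star v ⬝ᵥ ρ *ᵥ v := by
  rw [outer, mul_vecMulVec, trace_vecMulVec, dotProduct_comm]

lemma trace_outer (v : Fin d → ℂ) : (outer v).trace = star v ⬝ᵥ v := by
  simpa using trace_mul_outer 1 v

lemma re_trace_outer_mul_outer (v w : Fin d → ℂ) :
    (outer v * outer w).trace.re = ‖star v ⬝ᵥ w‖ ^ 2 := by
  rw [outer, outer, vecMulVec_mul_vecMulVec, trace_vecMulVec, dotProduct_smul, smul_eq_mul,
    dotProduct_star, dotProduct_comm w, ← starRingEnd_apply (star v ⬝ᵥ w), RCLike.mul_conj,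
    ← RCLike.ofReal_pow]
  exact Complex.ofReal_re _

end outer

section frameOperator

variable {d : ℕ} {ι : Type*} [Fintype ι]

noncomputable def frameOperator (u : ι → Fin d → ℂ) : Matrix (Fin d) (Fin d) ℂ :=
  ∑ x, outer (u x)

lemma isHermitian_frameOperator (u : ι → Fin d → ℂ) : (frameOperator u).IsHermitian :=
  isSelfAdjoint_sum _ fun x _ => isHermitian_outer (u x)

lemma re_trace_mul_frameOperator (ρ : Matrix (Fin d) (Fin d) ℂ) (u : ι → Fin d → ℂ) :
    (ρ * frameOperator u).trace.re = ∑ x, expec ρ (u x) := by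
  simp [frameOperator, mul_sum, trace_sum, trace_mul_outer, expec]

lemma trace_frameOperator (u : ι → Fin d → ℂ) :
    (frameOperator u).trace = ∑ x, star (u x) ⬝ᵥ u x := by
  simp [frameOperator, trace_sum, trace_outer]

lemma re_trace_frameOperator_mul_self (u : ι → Fin d → ℂ) :
    (frameOperator u * frameOperator u).trace.re = ∑ x, ∑ y, ‖star (u x) ⬝ᵥ u y‖ ^ 2 := by
  simp [frameOperator, sum_mul_sum, trace_sum, re_trace_outer_mul_outer]

end frameOperator

namespace IsMUBFamily

variable {d n : ℕ} {φ : Fin n → Fin d → Fin d → ℂ}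

lemma dotProduct_self (hφ : IsMUBFamily φ) (x : Fin n) (a : Fin d) :
    star (φ x a) ⬝ᵥ φ x a = 1 := by
  simpa using hφ.1 x a a

lemma norm_dotProduct_sq (hφ : IsMUBFamily φ) {x y : Fin n} (hxy : x ≠ y) (a b : Fin d) :
    ‖star (φ x a) ⬝ᵥ φ y b‖ ^ 2 = 1 / d := by
  rw [hφ.2 x y a b hxy, div_pow, one_pow, Real.sq_sqrt (Nat.cast_nonneg d)]

lemma sum_sum_norm_dotProduct_sq (hφ : IsMUBFamily φ) (a : Fin n → Fin d) :
    ∑ x, ∑ y, ‖star (φ x (a x)) ⬝ᵥ φ y (a y)‖ ^ 2 = n * (1 + (n - 1) / d) := by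
  have hrow : ∀ x, ∑ y, ‖star (φ x (a x)) ⬝ᵥ φ y (a y)‖ ^ 2 = 1 + (n - 1) / d := by
    intro x
    rw [← add_sum_erase _ _ (mem_univ x), hφ.dotProduct_self,
      sum_congr rfl fun y hy => hφ.norm_dotProduct_sq (ne_of_mem_erase hy).symm _ _]
    simp [card_erase_of_mem, Nat.cast_sub (Fin.pos x), div_eq_mul_inv]
  simp only [hrow, sum_const, card_univ, Fintype.card_fin, nsmul_eq_mul]

end IsMUBFamily

theorem mub_overlap_bound_general {d n : ℕ} (hn : 1 ≤ n)
    (φ : Fin n → Fin d → Fin d → ℂ) (hφ : IsMUBFamily φ)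
    (ρ : Matrix (Fin d) (Fin d) ℂ) (hρ : IsDensity ρ)
    (a : Fin n → Fin d) :
    (1 / (n : ℝ)) * ∑ x, expec ρ (φ x (a x)) ≤
      (1 / (d : ℝ)) * (1 + ((d : ℝ) - 1) / Real.sqrt n) := by
  have hd : (1 : ℝ) ≤ d := by
    exact_mod_cast Nat.one_le_iff_ne_zero.mpr (by simpa using card_ne_zero_of_trace_eq_one hρ.2)
  have hd0 : (d : ℝ) ≠ 0 := (zero_lt_one.trans_le hd).ne'
  have hn0 : (n : ℝ) ≠ 0 := by exact_mod_cast Nat.one_le_iff_ne_zero.mp hn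
  have htr : (frameOperator fun x => φ x (a x)).trace.re = n := by
    simp [trace_frameOperator, hφ.dotProduct_self]
  have key := hρ.1.re_trace_mul_le_of_trace_eq_one hρ.2
    (isHermitian_frameOperator fun x => φ x (a x))
  simp only [RCLike.re_to_complex, Fintype.card_fin] at key
  rw [re_trace_frameOperator_mul_self, hφ.sum_sum_norm_dotProduct_sq, re_trace_mul_frameOperator,
    htr] at key
  have hsqrt : √((1 - 1 / d) * (n * (1 + (n - 1) / d) - n ^ 2 / d)) = (1 - 1 / d) * √n := by
    have hd1 : 0 ≤ 1 - 1 / (d : ℝ) := sub_nonneg.mpr ((div_le_one (by positivity)).mpr hd)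
    rw [show (1 - 1 / d) * (n * (1 + (n - 1) / d) - n ^ 2 / d) = (1 - 1 / (d : ℝ)) ^ 2 * n by
      field_simp; ring, Real.sqrt_mul (sq_nonneg _), Real.sqrt_sq hd1]
  rw [hsqrt] at key
  have hsq : √(n : ℝ) * √n = n := Real.mul_self_sqrt n.cast_nonneg
  calc (1 / (n : ℝ)) * ∑ x, expec ρ (φ x (a x))
      ≤ 1 / n * (n / d + (1 - 1 / d) * √n) := by gcongr
    _ = _ := by
      field_simp
      linear_combination ((d : ℝ) - 1) * hsq

/-- MUB overlap bound for a fixed choice of outcomes (Rastegin). -/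
theorem mub_overlap_bound {d n : ℕ} (hd : 1 ≤ d) (hn : 1 ≤ n)
    (φ : Fin n → Fin d → Fin d → ℂ) (hφ : IsMUBFamily φ)
    (ρ : Matrix (Fin d) (Fin d) ℂ) (hρ : IsDensity ρ)
    (a : Fin n → Fin d) :
    (1 / (n : ℝ)) * ∑ x, expec ρ (φ x (a x)) ≤
      (1 / (d : ℝ)) * (1 + ((d : ℝ) - 1) / Real.sqrt n) :=
  mub_overlap_bound_general hn φ hφ ρ hρ a
end

section
/- Fix ω > 0 and β > 0. With n = d + 1, the ratio ξ(d) = [ω − ω e^{βω}/(e^{βω}+d−1)] / [(ω/d)(1 + (d−1)/√(d+1)) − ω e^{βω}/(e^{βω}+d−1)] satisfies: there exist constants c_1, c_2 > 0 and D such that for all d ≥ D, c_1 √d ≤ ξ(d) ≤ c_2 √d. In particular ξ(d) → ∞ as d → ∞. -/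
/-! With `s = √(d + 1)` the relation `s² = d + 1` collapses the ratio to
`ξ(d) = s (s + 1) / (s + 2 - e^{βω})`, so `ξ(d) / √d → 1`; eventually `ξ(d)` then lies between
`√d / 2` and `2 √d`. -/

open Filter

/-- The quantum-to-classical work ratio with n = d+1 mutually unbiased bases. -/
noncomputable def xiRatio (ω β : ℝ) (d : ℕ) : ℝ :=
  (ω - ω * Real.exp (β * ω) / (Real.exp (β * ω) + (d : ℝ) - 1)) /
    ((ω / (d : ℝ)) * (1 + ((d : ℝ) - 1) / Real.sqrt ((d : ℝ) + 1)) -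
      ω * Real.exp (β * ω) / (Real.exp (β * ω) + (d : ℝ) - 1))

open Asymptotics Topology

theorem xiRatio_eq_of_two_le (ω β : ℝ) (hω : ω ≠ 0) {d : ℕ} (hd : 2 ≤ d) :
    xiRatio ω β d = √(d + 1) * (√(d + 1) + 1) / (√(d + 1) + 2 - Real.exp (β * ω)) := by
  have hx : (2 : ℝ) ≤ d := by exact_mod_cast hd
  set E := Real.exp (β * ω)
  set x : ℝ := (d : ℝ)
  set s := √(x + 1)
  have hs : s ^ 2 = x + 1 := Real.sq_sqrt (by linarith)
  have hs0 : 0 < s := Real.sqrt_pos.mpr (by linarith)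
  have hA : 0 < E + x - 1 := by linarith [Real.exp_pos (β * ω)]
  have hnum : ω - ω * E / (E + x - 1) = ω * (x - 1) / (E + x - 1) := by
    field_simp; ring
  have hden : ω / x * (1 + (x - 1) / s) - ω * E / (E + x - 1)
      = ω * (x - 1) / (E + x - 1) * ((s + 2 - E) / (s * (s + 1))) := by
    field_simp
    linear_combination (x - 1) * (1 - E) * hs
  have hnum0 : ω * (x - 1) / (E + x - 1) ≠ 0 := by
    have : x - 1 ≠ 0 := by linarith
    positivity
  unfold xiRatio
  rw [hnum, hden, div_mul_cancel_left₀ hnum0, inv_div]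

theorem tendsto_add_div_add_atTop (b c : ℝ) :
    Tendsto (fun x : ℝ => (x + b) / (x + c)) atTop (𝓝 1) := by
  have hb : (fun x : ℝ => x + b) ~[atTop] id :=
    IsEquivalent.refl.add_isLittleO (isLittleO_const_id_atTop b)
  have hc : (fun x : ℝ => x + c) ~[atTop] id :=
    IsEquivalent.refl.add_isLittleO (isLittleO_const_id_atTop c)
  refine (isEquivalent_iff_tendsto_one ?_).mp (hb.trans hc.symm)
  filter_upwards [eventually_gt_atTop (-c)] with x hx
  linarith

theorem tendsto_sqrt_add_one_div_sqrt_atTop :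
    Tendsto (fun x : ℝ => √(x + 1) / √x) atTop (𝓝 1) := by
  have h := (Real.continuous_sqrt.tendsto 1).comp (tendsto_add_div_add_atTop 1 0)
  rw [Real.sqrt_one] at h
  refine h.congr' ?_
  filter_upwards [eventually_ge_atTop 0] with x hx
  simp only [Function.comp_apply, add_zero, Real.sqrt_div' _ hx]

theorem tendsto_xiRatio_div_sqrt (ω β : ℝ) (hω : ω ≠ 0) :
    Tendsto (fun d : ℕ => xiRatio ω β d / √d) atTop (𝓝 1) := by
  have hs : Tendsto (fun d : ℕ => √((d : ℝ) + 1)) atTop atTop :=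
    Real.tendsto_sqrt_atTop.comp (tendsto_atTop_add_const_right _ 1 tendsto_natCast_atTop_atTop)
  have h := (tendsto_sqrt_add_one_div_sqrt_atTop.comp tendsto_natCast_atTop_atTop).mul
    ((tendsto_add_div_add_atTop 1 (2 - Real.exp (β * ω))).comp hs)
  rw [mul_one] at h
  refine h.congr' ?_
  filter_upwards [eventually_ge_atTop 2] with d hd
  rw [xiRatio_eq_of_two_le ω β hω hd]
  simp only [Function.comp_apply]
  ring

theorem Filter.Tendsto.eventually_inv_two_mul_le_and_le_two_mul {α : Type*} {l : Filter α}
    {f g : α → ℝ}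
    (h : Tendsto (fun x => f x / g x) l (𝓝 1)) (hg : ∀ᶠ x in l, 0 < g x) :
    ∀ᶠ x in l, 2⁻¹ * g x ≤ f x ∧ f x ≤ 2 * g x := by
  filter_upwards [h.eventually (Ioo_mem_nhds (by norm_num : (2⁻¹ : ℝ) < 1) one_lt_two), hg]
    with x ⟨hlo, hhi⟩ hgx
  rw [lt_div_iff₀ hgx] at hlo
  rw [div_lt_iff₀ hgx] at hhi
  exact ⟨hlo.le, hhi.le⟩

theorem xiRatio_sqrt_growth_general (ω β : ℝ) (hω : 0 < ω) :
    ∃ c₁ c₂ : ℝ, 0 < c₁ ∧ 0 < c₂ ∧ ∃ D : ℕ,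
      (∀ d : ℕ, D ≤ d →
        c₁ * Real.sqrt d ≤ xiRatio ω β d ∧ xiRatio ω β d ≤ c₂ * Real.sqrt d) ∧
      Tendsto (xiRatio ω β) atTop atTop := by
  have hsqrt : Tendsto (fun d : ℕ => √(d : ℝ)) atTop atTop :=
    Real.tendsto_sqrt_atTop.comp tendsto_natCast_atTop_atTop
  have hbounds := (tendsto_xiRatio_div_sqrt ω β hω.ne').eventually_inv_two_mul_le_and_le_two_mul
    (hsqrt.eventually_gt_atTop 0)
  obtain ⟨D, hD⟩ := eventually_atTop.mp hbounds
  refine ⟨2⁻¹, 2, by norm_num, by norm_num, D, hD, ?_⟩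
  exact tendsto_atTop_mono' _ (hbounds.mono fun _ h => h.1) (hsqrt.const_mul_atTop (by norm_num))

/-- The ratio ξ(d) grows as Θ(√d); in particular ξ(d) → ∞. -/
theorem xiRatio_sqrt_growth (ω β : ℝ) (hω : 0 < ω) (hβ : 0 < β) :
    ∃ c₁ c₂ : ℝ, 0 < c₁ ∧ 0 < c₂ ∧ ∃ D : ℕ,
      (∀ d : ℕ, D ≤ d →
        c₁ * Real.sqrt d ≤ xiRatio ω β d ∧ xiRatio ω β d ≤ c₂ * Real.sqrt d) ∧
      Tendsto (xiRatio ω β) atTop atTop :=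
  xiRatio_sqrt_growth_general ω β hω
end

section
/- Let |ψ⟩ = (1/√d) ∑_i |i⟩⊗|i⟩, and let {|φ_x^a⟩}_{a} be an orthonormal basis of ℂ^d for each x. If Alice measures the projective measurement {|φ_x^{*a}⟩⟨φ_x^{*a}|}_a (where |φ_x^{*a}⟩ = ∑_i ⟨φ_x^a|i⟩|i⟩) on the first subsystem, then the resulting assemblage ρ_{a|x} = Tr_A[(|φ_x^{*a}⟩⟨φ_x^{*a}| ⊗ I)|ψ⟩⟨ψ|] = (1/d)|φ_x^a⟩⟨φ_x^a| is not unsteerable whenever the bases for two different x values are mutually unbiased and d ≥ 2. -/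
/-!
Suppose the assemblage had a local-hidden-state model and pick a hidden state `σ_λ` of positive
weight. For every setting `x` some outcome `a` has `p(a|x,λ) > 0`, and then
`p(λ) p(a|x,λ) σ_λ ≤ ρ_{a|x} = |φ_x^a⟩⟨φ_x^a| / d`: the density matrix `σ_λ` vanishes on the
orthogonal complement of `φ_x^a`, so it is the pure state `|φ_x^a⟩⟨φ_x^a|`. Two different settings
then give `|⟨φ_y^b|φ_x^a⟩| = 1`, whereas mutual unbiasedness says it is `1/√d < 1`.
-/

open Matrix Finset Filter
open scoped ComplexOrder

/-- An assemblage admits a local-hidden-state (unsteerable) decomposition. -/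
def Unsteerable {d n : ℕ} (ρ : Fin d → Fin n → Matrix (Fin d) (Fin d) ℂ) : Prop :=
  ∃ (m : ℕ) (p : Fin m → ℝ) (q : Fin n → Fin m → Fin d → ℝ)
    (σ : Fin m → Matrix (Fin d) (Fin d) ℂ),
    (∀ l, 0 ≤ p l) ∧ (∑ l, p l = 1) ∧ (∀ x l a, 0 ≤ q x l a) ∧
    (∀ x l, ∑ a, q x l a = 1) ∧ (∀ l, IsDensity (σ l)) ∧
    ∀ a x, ρ a x = ∑ l, (p l * q x l a) • σ l

lemma exists_pos_of_sum_eq_one {ι : Type*} [Fintype ι] {f : ι → ℝ} (h : ∑ i, f i = 1) :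
    ∃ i, 0 < f i := by
  obtain ⟨i, -, hi⟩ := Finset.exists_lt_of_sum_lt (s := univ) (f := 0) (g := f) (by simp [h])
  exact ⟨i, hi⟩

lemma outer_mulVec {d : ℕ} (v w : Fin d → ℂ) : outer v *ᵥ w = (star v ⬝ᵥ w) • v := by
  simp [outer, vecMulVec_mulVec]

namespace Matrix.PosSemidef

variable {ι m : Type*} [Fintype ι] [Fintype m]

lemma mulVec_eq_zero_of_dotProduct_sum_smul_mulVec_eq_zero {c : ι → ℝ} {σ : ι → Matrix m m ℂ}
    (hc : ∀ i, 0 ≤ c i) (hσ : ∀ i, (σ i).PosSemidef) {w : m → ℂ}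
    (hw : star w ⬝ᵥ (∑ i, c i • σ i) *ᵥ w = 0) {i : ι} (hi : 0 < c i) : σ i *ᵥ w = 0 := by
  have hterm_nonneg : ∀ j ∈ univ, 0 ≤ star w ⬝ᵥ (c j • σ j) *ᵥ w := fun j _ => by
    rw [smul_mulVec, dotProduct_smul, Complex.real_smul]
    exact mul_nonneg (by exact_mod_cast hc j) ((hσ j).dotProduct_mulVec_nonneg w)
  rw [Matrix.sum_mulVec, dotProduct_sum] at hw
  have hterm := (sum_eq_zero_iff_of_nonneg hterm_nonneg).mp hw i (mem_univ i)
  rw [smul_mulVec, dotProduct_smul, smul_eq_zero] at hterm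
  exact ((hσ i).dotProduct_mulVec_zero_iff w).mp (hterm.resolve_left hi.ne')

end Matrix.PosSemidef

lemma IsDensity.eq_outer_of_mulVec_eq_zero {d : ℕ} {σ : Matrix (Fin d) (Fin d) ℂ}
    (hσ : IsDensity σ) {u : Fin d → ℂ} (hu : star u ⬝ᵥ u = 1)
    (hker : ∀ w, star u ⬝ᵥ w = 0 → σ *ᵥ w = 0) : σ = outer u := by
  have hcol : σ = vecMulVec (σ *ᵥ u) (star u) := by
    refine ext_iff_mulVec.mpr fun v => ?_
    have hv : star u ⬝ᵥ (v - (star u ⬝ᵥ v) • u) = 0 := by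
      rw [dotProduct_sub, dotProduct_smul, hu, smul_eq_mul, mul_one, sub_self]
    have hσv := hker _ hv
    rw [mulVec_sub, mulVec_smul, sub_eq_zero] at hσv
    rw [vecMulVec_mulVec, op_smul_eq_smul, hσv]
  have hrow : σ = vecMulVec u (star (σ *ᵥ u)) := by
    conv_lhs => rw [← hσ.1.1, hcol]
    rw [conjTranspose_vecMulVec, star_star]
  have htr : star u ⬝ᵥ σ *ᵥ u = 1 := by
    have htrace := hσ.2
    rwa [hcol, trace_vecMulVec, dotProduct_comm] at htrace
  have heig : σ *ᵥ u = u := by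
    conv_lhs => rw [hrow]
    rw [vecMulVec_mulVec, op_smul_eq_smul, star_dotProduct, htr, star_one, one_smul]
  rw [hrow, heig, outer]

lemma norm_dotProduct_eq_one_of_outer_eq {d : ℕ} {u v : Fin d → ℂ} (hu : star u ⬝ᵥ u = 1)
    (h : outer u = outer v) : ‖star v ⬝ᵥ u‖ = 1 := by
  have hsq : (‖star v ⬝ᵥ u‖ ^ 2 : ℝ) = 1 := by
    have hquad := congrArg (fun M => star u ⬝ᵥ M *ᵥ u) h
    simp only [outer_mulVec, dotProduct_smul, smul_eq_mul, hu, mul_one] at hquad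
    rw [star_dotProduct u v, Complex.star_def, Complex.mul_conj'] at hquad
    exact_mod_cast hquad.symm
  exact (pow_eq_one_iff_of_nonneg (norm_nonneg _) two_ne_zero).mp hsq

/-- The assemblage (1/d)|φ_x^a⟩⟨φ_x^a| obtained from the maximally entangled state
by measuring mutually unbiased bases is steerable (not unsteerable). -/
theorem maxEnt_assemblage_steerable {d n : ℕ} (hd : 2 ≤ d) (hn : 2 ≤ n)
    (φ : Fin n → Fin d → Fin d → ℂ)
    (horth : ∀ x a b, dotProduct (star (φ x a)) (φ x b) = if a = b then 1 else 0)
    (hmub : ∀ x y a b, x ≠ y →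
      ‖dotProduct (star (φ x a)) (φ y b)‖ = 1 / Real.sqrt d) :
    ¬ Unsteerable (fun a x => ((d : ℝ)⁻¹) • outer (φ x a)) := by
  rintro ⟨m, p, q, σ, hp, hpsum, hq, hqsum, hσ, hρ⟩
  have hunit : ∀ x a, star (φ x a) ⬝ᵥ φ x a = 1 := fun x a => by simpa using horth x a a
  obtain ⟨l, hl⟩ := exists_pos_of_sum_eq_one hpsum
  have hpure : ∀ x a, 0 < q x l a → σ l = outer (φ x a) := fun x a ha => by
    refine (hσ l).eq_outer_of_mulVec_eq_zero (hunit x a) fun w hw => ?_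
    refine PosSemidef.mulVec_eq_zero_of_dotProduct_sum_smul_mulVec_eq_zero
      (fun l => mul_nonneg (hp l) (hq x l a)) (fun l => (hσ l).1) ?_ (mul_pos hl ha)
    rw [← hρ a x, smul_mulVec, outer_mulVec, hw, zero_smul, smul_zero, dotProduct_zero]
  let x₀ : Fin n := ⟨0, by omega⟩
  let x₁ : Fin n := ⟨1, by omega⟩
  obtain ⟨a₀, ha₀⟩ := exists_pos_of_sum_eq_one (hqsum x₀ l)
  obtain ⟨a₁, ha₁⟩ := exists_pos_of_sum_eq_one (hqsum x₁ l)
  have hone := norm_dotProduct_eq_one_of_outer_eq (hunit x₀ a₀)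
    ((hpure x₀ a₀ ha₀).symm.trans (hpure x₁ a₁ ha₁))
  rw [hmub x₁ x₀ a₁ a₀ (by simp [x₀, x₁, Fin.ext_iff]), one_div, inv_eq_one,
    Real.sqrt_eq_one, Nat.cast_eq_one] at hone
  omega
end
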